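/- arXiv:2410.11303 — 4 statements merged into one kernel-verified Lean document; each statement's English description precedes it below -/
import Mathlib

section
/- Let the regularizer be G_KDE and assume s* ≤ s̄/2. Let γ' ∈ ℝ^{M×N} be feasible and set r' = max_{i ∈ [M], k ∈ [K_i]} ρ_{j_k^i}·γ'_{i j_k^i}; suppose r' > 1/(M·s*). For each i ∈ [M] set K̂_i = max{K ∈ {0,…,N} : Σ_{k=1}^{K} r'/ρ_{j_k^i} ≤ 1/M}, and define γ'' ∈ ℝ^{M×N} row-wise by γ''_{i j_k^i} = r'/ρ_{j_k^i} for k ≤ K̂_i, γ''_{i j_{K̂_i+1}^i} = 1/M − Σ_{k=1}^{K̂_i} r'/ρ_{j_k^i}, and γ''_{i j_k^i} = 0 for K̂_i + 1 < k ≤ N. Then K̂_i ≤ K_i for every i ∈ [M], γ'' is feasible, and L(γ'') ≤ L(γ'). -/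
open Finset

private lemma abel_aux (D f : ℕ → ℝ) : ∀ n : ℕ, (∀ k, k + 1 < n → D k ≤ D (k+1)) →
    (∀ k, k < n → ∑ l ∈ Finset.range (k+1), f l ≤ 0) →
    (∑ k ∈ Finset.range n, f k) * D (n-1) ≤ ∑ k ∈ Finset.range n, f k * D k := by
  intro n
  induction n with
  | zero => simp
  | succ n ih =>
    intro hD hf
    rcases Nat.eq_zero_or_pos n with h0 | hpos
    · subst h0; simp
    · have h1 : ∑ k ∈ Finset.range n, f k ≤ 0 := by
        have := hf (n-1) (by omega)
        rwa [Nat.sub_add_cancel hpos] at this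
      have h2 : D (n-1) ≤ D n := by
        have := hD (n-1) (by omega)
        rwa [Nat.sub_add_cancel hpos] at this
      have ih' := ih (fun k hk => hD k (by omega)) (fun k hk => hf k (by omega))
      rw [Finset.sum_range_succ, Finset.sum_range_succ, Nat.add_sub_cancel]
      have h3 : (∑ k ∈ Finset.range n, f k) * D n ≤ (∑ k ∈ Finset.range n, f k) * D (n-1) :=
        mul_le_mul_of_nonpos_left h2 h1
      nlinarith [ih']

/-- Second case of the proof of Theorem 2: if the maximum density-weighted entry `r'` of a
feasible `γ'` on the `K_i`-neighborhoods exceeds `1/(M·s*)`, then the water-filling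
transport `γ''` at weight level `r'` satisfies `K̂_i ≤ K_i`, is feasible, and has no larger
objective than `γ'`. -/
theorem stmt_12 (M N : ℕ) (hM : 1 ≤ M) (hN : 1 ≤ N)
    (d : Fin M → Fin N → ℝ) (hd : ∀ i j, 0 ≤ d i j)
    (C α : ℝ) (hC : 0 < C) (hα0 : 0 ≤ α) (hα1 : α < 1)
    (σ : Fin M → Equiv.Perm (Fin N))
    (hsort : ∀ i, Monotone fun k => d i (σ i k))
    (ρ : Fin N → ℝ) (hρ : ∀ j, 0 < ρ j)
    (sbar : ℝ) (hsbar : sbar = ∑ j, 1 / ρ j)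
    -- `D i l` / `R i l` : sorted distances and inverse densities (0-indexed position `l`)
    (D : Fin M → ℕ → ℝ) (hD : ∀ i (l : Fin N), D i (l : ℕ) = d i (σ i l))
    (R : Fin M → ℕ → ℝ) (hR : ∀ i (l : Fin N), R i (l : ℕ) = 1 / ρ (σ i l))
    -- `S i k` is the paper's `s_k^i`
    (S : Fin M → ℕ → ℝ) (hS : ∀ i k, k ≤ N → S i k = ∑ l ∈ Finset.range k, R i l)
    -- the step functions `c_i` and their sum `c`
    (ci : Fin M → ℝ → ℝ)
    (hci0 : ∀ i (s : ℝ), s ≤ S i 1 → ci i s = 0)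
    (hci : ∀ i (s : ℝ) (k : ℕ), 2 ≤ k → k ≤ N → S i (k - 1) < s → s ≤ S i k →
      ci i s = ∑ l ∈ Finset.range (k - 1), (D i (k - 1) - D i l) * R i l)
    (c : ℝ → ℝ) (hc : ∀ s, c s = ∑ i, ci i s)
    -- the finite set `𝒮`
    (Scal : Set ℝ)
    (hScal : Scal = insert (0 : ℝ) {x : ℝ | ∃ i : Fin M, ∃ k, 1 ≤ k ∧ k ≤ N ∧ x = S i k})
    -- `s*` is the largest `s ∈ 𝒮` with `(α/C)·c(s) < (1-α)·M`
    (sstar : ℝ) (hsstar1 : sstar ∈ Scal)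
    (hsstar2 : (α / C) * c sstar < (1 - α) * (M : ℝ))
    (hsstar3 : ∀ s ∈ Scal, (α / C) * c s < (1 - α) * (M : ℝ) → s ≤ sstar)
    -- `K_i = max {k ∈ {0,…,N−1} : s_k^i ≤ s*}`
    (Ki : Fin M → ℕ)
    (hKi1 : ∀ i, Ki i ≤ N - 1)
    (hKi2 : ∀ i, S i (Ki i) ≤ sstar)
    (hKi3 : ∀ i k, k ≤ N - 1 → S i k ≤ sstar → k ≤ Ki i)
    -- the objective with regularizer `G_KDE`
    (L : (Fin M → Fin N → ℝ) → ℝ)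
    (hL : ∀ γ, L γ = (α / C) * (∑ i, ∑ j, γ i j * d i j)
      + (1 - α) * ((M : ℝ) * ⨆ i, ⨆ j, ρ j * |γ i j - (1 / ρ j) / ((M : ℝ) * sbar)|))
    -- the assumption `s* ≤ s̄/2`
    (hshalf : sstar ≤ sbar / 2)
    -- `γ'` is feasible
    (γ' : Fin M → Fin N → ℝ)
    (hγ'1 : ∀ i j, 0 ≤ γ' i j) (hγ'2 : ∀ i, ∑ j, γ' i j = 1 / (M : ℝ))
    -- `r'` is the maximum density-weighted entry of `γ'` over the `K_i`-neighborhoods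
    (r' : ℝ)
    (hr1 : ∀ i (k : Fin N), (k : ℕ) < Ki i → ρ (σ i k) * γ' i (σ i k) ≤ r')
    (hr2 : ∃ i : Fin M, ∃ k : Fin N, (k : ℕ) < Ki i ∧ r' = ρ (σ i k) * γ' i (σ i k))
    (hr3 : 1 / ((M : ℝ) * sstar) < r')
    -- `K̂_i = max {K ∈ {0,…,N} : Σ_{k=1}^{K} r'/ρ_{j_k^i} ≤ 1/M}`
    (Khat : Fin M → ℕ)
    (hKhat1 : ∀ i, Khat i ≤ N)
    (hKhat2 : ∀ i, ∑ l ∈ Finset.range (Khat i), r' * R i l ≤ 1 / (M : ℝ))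
    (hKhat3 : ∀ i k, k ≤ N → (∑ l ∈ Finset.range k, r' * R i l) ≤ 1 / (M : ℝ) → k ≤ Khat i)
    -- the water-filling transport `γ''` at weight level `r'`
    (γ'' : Fin M → Fin N → ℝ)
    (hγ'' : ∀ i (k : Fin N), γ'' i (σ i k) =
      if (k : ℕ) < Khat i then r' / ρ (σ i k)
      else if (k : ℕ) = Khat i then
        1 / (M : ℝ) - ∑ l ∈ Finset.range (Khat i), r' * R i l
      else 0) :
    (∀ i, Khat i ≤ Ki i) ∧
      ((∀ i j, 0 ≤ γ'' i j) ∧ (∀ i, ∑ j, γ'' i j = 1 / (M : ℝ))) ∧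
      L γ'' ≤ L γ' := by
  have hM0 : (0:ℝ) < M := by exact_mod_cast hM
  have hNe : Nonempty (Fin N) := ⟨⟨0, hN⟩⟩
  have hMe : Nonempty (Fin M) := ⟨⟨0, hM⟩⟩
  have hsbar0 : 0 < sbar := by
    rw [hsbar]
    exact Finset.sum_pos (fun j _ => one_div_pos.mpr (hρ j)) ⟨⟨0, hN⟩, Finset.mem_univ _⟩
  -- sstar > 0
  have hS1 : ∀ i, S i 1 = 1 / ρ (σ i ⟨0, hN⟩) := by
    intro i
    rw [hS i 1 hN, Finset.sum_range_one]
    exact hR i ⟨0, hN⟩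
  obtain ⟨imin, -, hmin⟩ := Finset.exists_min_image Finset.univ (fun i => S i 1)
    ⟨⟨0, hM⟩, Finset.mem_univ _⟩
  have hcmin : c (S imin 1) = 0 := by
    rw [hc]
    exact Finset.sum_eq_zero fun i _ => hci0 i _ (hmin i (Finset.mem_univ i))
  have hsmin_le : S imin 1 ≤ sstar := by
    refine hsstar3 _ ?_ ?_
    · rw [hScal]; exact Set.mem_insert_of_mem _ ⟨imin, 1, le_refl 1, hN, rfl⟩
    · rw [hcmin, mul_zero]
      exact mul_pos (by linarith) hM0
  have hsstar0 : 0 < sstar := lt_of_lt_of_le (by rw [hS1]; exact one_div_pos.mpr (hρ _)) hsmin_le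
  have hr'0 : 0 < r' := lt_trans (one_div_pos.mpr (mul_pos hM0 hsstar0)) hr3
  -- S i N = sbar
  have hSN : ∀ i, S i N = sbar := by
    intro i
    rw [hS i N le_rfl, hsbar, ← Fin.sum_univ_eq_sum_range (fun l => R i l) N]
    rw [Finset.sum_congr rfl (fun l _ => hR i l)]
    exact Equiv.sum_comp (σ i) (fun j => 1 / ρ j)
  have hsum_r : ∀ i k, k ≤ N → ∑ l ∈ Finset.range k, r' * R i l = r' * S i k := by
    intro i k hk; rw [hS i k hk, Finset.mul_sum]
  have hSKs : ∀ i, S i (Khat i) < sstar := by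
    intro i
    have h := hKhat2 i
    rw [hsum_r i _ (hKhat1 i)] at h
    have h2 : 1 < r' * ((M:ℝ) * sstar) := (div_lt_iff₀ (mul_pos hM0 hsstar0)).mp hr3
    have h' : (M:ℝ) * (r' * S i (Khat i)) ≤ (M:ℝ) * (1/(M:ℝ)) :=
      mul_le_mul_of_nonneg_left h hM0.le
    rw [mul_one_div_cancel (ne_of_gt hM0)] at h'
    nlinarith [mul_pos hr'0 hM0]
  have hKhatN : ∀ i, Khat i ≤ N - 1 := by
    intro i
    by_contra h
    have hKeq : Khat i = N := by have := hKhat1 i; omega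
    have : sbar < sstar := by rw [← hSN i, ← hKeq]; exact hSKs i
    linarith
  have hKhatltN : ∀ i, Khat i < N := fun i => by have := hKhatN i; omega
  have part1 : ∀ i, Khat i ≤ Ki i := fun i => hKi3 i _ (hKhatN i) (le_of_lt (hSKs i))
  -- nonnegativity of γ''
  have hγ''nn : ∀ i j, 0 ≤ γ'' i j := by
    intro i j
    have hj : σ i ((σ i).symm j) = j := (σ i).apply_symm_apply j
    rw [← hj, hγ'' i ((σ i).symm j)]
    split_ifs with h1 h2
    · exact div_nonneg hr'0.le (hρ _).le
    · linarith [hKhat2 i]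
    · exact le_refl 0
  -- abbreviation for the row values of γ''
  set g : Fin M → ℕ → ℝ := fun i k =>
    if k < Khat i then r' * R i k
    else if k = Khat i then 1/(M:ℝ) - ∑ l ∈ Finset.range (Khat i), r' * R i l
    else 0 with hg
  have hγ''val : ∀ i (k : Fin N), γ'' i (σ i k) = g i (k:ℕ) := by
    intro i k
    rw [hγ'' i k]
    simp only [hg, hR i k]
    split_ifs <;> ring
  have hgsum : ∀ i m, Khat i < m → ∑ k ∈ Finset.range m, g i k = 1/(M:ℝ) := by
    intro i m hm
    have hsub : Finset.range (Khat i + 1) ⊆ Finset.range m := Finset.range_subset_range.mpr hm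
    rw [← Finset.sum_subset hsub (by
      intro x hx hx'
      simp only [Finset.mem_range] at hx hx'
      simp only [hg]
      rw [if_neg (by omega), if_neg (by omega)])]
    rw [Finset.sum_range_succ]
    have e1 : ∑ k ∈ Finset.range (Khat i), g i k = ∑ k ∈ Finset.range (Khat i), r' * R i k := by
      refine Finset.sum_congr rfl fun k hk => ?_
      simp only [hg]
      rw [if_pos (Finset.mem_range.mp hk)]
    have e2 : g i (Khat i) = 1/(M:ℝ) - ∑ l ∈ Finset.range (Khat i), r' * R i l := by
      simp [hg]
    rw [e1, e2]; ring
  have hγ''row : ∀ i, ∑ j, γ'' i j = 1 / (M:ℝ) := by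
    intro i
    rw [← Equiv.sum_comp (σ i) (fun j => γ'' i j)]
    rw [Finset.sum_congr rfl (fun k _ => hγ''val i k)]
    rw [Fin.sum_univ_eq_sum_range (fun k => g i k) N]
    exact hgsum i N (hKhatltN i)
  -- Khat is maximal
  have hKhatmax : ∀ i, 1/(M:ℝ) < ∑ l ∈ Finset.range (Khat i + 1), r' * R i l := by
    intro i
    by_contra h
    push_neg at h
    have := hKhat3 i (Khat i + 1) (hKhatltN i) h
    omega
  -- bounds on ρ_j γ''_{ij}
  have hub : ∀ i j, 0 ≤ ρ j * γ'' i j ∧ ρ j * γ'' i j ≤ r' := by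
    intro i j
    refine ⟨mul_nonneg (hρ j).le (hγ''nn i j), ?_⟩
    have hj : σ i ((σ i).symm j) = j := (σ i).apply_symm_apply j
    set k := (σ i).symm j with hk
    rw [← hj, hγ'' i k]
    split_ifs with h1 h2
    · rw [mul_comm, div_mul_cancel₀ r' (ne_of_gt (hρ _))]
    · have hmax := hKhatmax i
      rw [Finset.sum_range_succ] at hmax
      have hRK : R i (Khat i) = 1 / ρ (σ i k) := h2 ▸ hR i k
      rw [hRK, mul_one_div] at hmax
      have h3 : 1/(M:ℝ) - ∑ l ∈ Finset.range (Khat i), r' * R i l < r' / ρ (σ i k) := by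
        linarith
      have h4 := (lt_div_iff₀ (hρ (σ i k))).mp h3
      rw [mul_comm]
      linarith
    · simpa using hr'0.le
  -- the reference level t
  have ht0 : 0 < 1/((M:ℝ)*sbar) := one_div_pos.mpr (mul_pos hM0 hsbar0)
  have h2t : 2 * (1/((M:ℝ)*sbar)) ≤ r' := by
    have key : 2 * (1/((M:ℝ)*sbar)) ≤ 1/((M:ℝ)*sstar) := by
      rw [mul_one_div, div_le_div_iff₀ (mul_pos hM0 hsbar0) (mul_pos hM0 hsstar0)]
      nlinarith [mul_nonneg hM0.le (show (0:ℝ) ≤ sbar - 2*sstar by linarith)]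
    linarith
  have habs : ∀ (j : Fin N) (x : ℝ),
      ρ j * |x - (1/ρ j)/((M:ℝ)*sbar)| = |ρ j * x - 1/((M:ℝ)*sbar)| := by
    intro j x
    have hmul : ρ j * ((1/ρ j)/((M:ℝ)*sbar)) = 1/((M:ℝ)*sbar) := by
      rw [← mul_div_assoc, mul_one_div_cancel (ne_of_gt (hρ j))]
    rw [show ρ j * x - 1/((M:ℝ)*sbar) = ρ j * (x - (1/ρ j)/((M:ℝ)*sbar)) by
      rw [mul_sub, hmul], abs_mul, abs_of_pos (hρ j)]
  -- sup bound for γ''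
  have hsup'' : (⨆ i, ⨆ j, ρ j * |γ'' i j - (1/ρ j)/((M:ℝ)*sbar)|)
      ≤ r' - 1/((M:ℝ)*sbar) := by
    refine ciSup_le fun i => ciSup_le fun j => ?_
    rw [habs]
    obtain ⟨h1, h2⟩ := hub i j
    rw [abs_le]
    constructor <;> linarith
  -- sup lower bound for γ'
  have hsup' : r' - 1/((M:ℝ)*sbar) ≤ ⨆ i, ⨆ j, ρ j * |γ' i j - (1/ρ j)/((M:ℝ)*sbar)| := by
    obtain ⟨i0, k0, hk0, hrk0⟩ := hr2
    have e : ρ (σ i0 k0) * |γ' i0 (σ i0 k0) - (1/ρ (σ i0 k0))/((M:ℝ)*sbar)|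
        = r' - 1/((M:ℝ)*sbar) := by
      rw [habs, ← hrk0, abs_of_nonneg (by linarith)]
    calc r' - 1/((M:ℝ)*sbar)
        = ρ (σ i0 k0) * |γ' i0 (σ i0 k0) - (1/ρ (σ i0 k0))/((M:ℝ)*sbar)| := e.symm
      _ ≤ ⨆ j, ρ j * |γ' i0 j - (1/ρ j)/((M:ℝ)*sbar)| :=
          le_ciSup (f := fun j => ρ j * |γ' i0 j - (1/ρ j)/((M:ℝ)*sbar)|)
            (Set.Finite.bddAbove (Set.finite_range _)) (σ i0 k0)
      _ ≤ ⨆ i, ⨆ j, ρ j * |γ' i j - (1/ρ j)/((M:ℝ)*sbar)| :=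
          le_ciSup (f := fun i => ⨆ j, ρ j * |γ' i j - (1/ρ j)/((M:ℝ)*sbar)|)
            (Set.Finite.bddAbove (Set.finite_range _)) i0
  -- cost comparison per row
  have hcost : ∀ i, ∑ j, γ'' i j * d i j ≤ ∑ j, γ' i j * d i j := by
    intro i
    set a : ℕ → ℝ := fun k => if h : k < N then γ' i (σ i ⟨k, h⟩) else 0 with ha
    set b : ℕ → ℝ := fun k => if h : k < N then γ'' i (σ i ⟨k, h⟩) else 0 with hb
    have haval : ∀ (k : Fin N), a (k:ℕ) = γ' i (σ i k) := by
      intro k; rw [ha]; simp only; rw [dif_pos k.isLt]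
    have hbval : ∀ (k : Fin N), b (k:ℕ) = γ'' i (σ i k) := by
      intro k; rw [hb]; simp only; rw [dif_pos k.isLt]
    have hbg : ∀ k, k < N → b k = g i k := by
      intro k hk
      have : b ((⟨k, hk⟩ : Fin N) : ℕ) = γ'' i (σ i ⟨k, hk⟩) := hbval ⟨k, hk⟩
      rw [this, hγ''val i ⟨k, hk⟩]
    have ea : ∑ j, γ' i j * d i j = ∑ k ∈ Finset.range N, a k * D i k := by
      rw [← Equiv.sum_comp (σ i) (fun j => γ' i j * d i j),
        ← Fin.sum_univ_eq_sum_range (fun k => a k * D i k) N]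
      exact Finset.sum_congr rfl fun k _ => by rw [haval k, hD i k]
    have eb : ∑ j, γ'' i j * d i j = ∑ k ∈ Finset.range N, b k * D i k := by
      rw [← Equiv.sum_comp (σ i) (fun j => γ'' i j * d i j),
        ← Fin.sum_univ_eq_sum_range (fun k => b k * D i k) N]
      exact Finset.sum_congr rfl fun k _ => by rw [hbval k, hD i k]
    have ha_total : ∑ k ∈ Finset.range N, a k = 1/(M:ℝ) := by
      rw [← Fin.sum_univ_eq_sum_range (fun k => a k) N,
        Finset.sum_congr rfl (fun k _ => haval k), Equiv.sum_comp (σ i) (fun j => γ' i j)]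
      exact hγ'2 i
    have hb_total : ∑ k ∈ Finset.range N, b k = 1/(M:ℝ) := by
      rw [Finset.sum_congr rfl (fun k hk => hbg k (Finset.mem_range.mp hk))]
      exact hgsum i N (hKhatltN i)
    have ha_nn : ∀ k, 0 ≤ a k := by
      intro k; rw [ha]; simp only
      split_ifs with h
      · exact hγ'1 i _
      · exact le_refl 0
    have hab : ∀ k, k < Khat i → a k ≤ b k := by
      intro k hk
      have hkN : k < N := lt_trans hk (hKhatltN i)
      have h1 : ρ (σ i ⟨k, hkN⟩) * γ' i (σ i ⟨k, hkN⟩) ≤ r' :=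
        hr1 i ⟨k, hkN⟩ (lt_of_lt_of_le hk (part1 i))
      have hbk : b k = r' * R i k := by
        rw [hbg k hkN, hg]; simp only; rw [if_pos hk]
      have hRk : R i k = 1 / ρ (σ i ⟨k, hkN⟩) := hR i ⟨k, hkN⟩
      have hak : a k = γ' i (σ i ⟨k, hkN⟩) := by rw [ha]; simp only; rw [dif_pos hkN]
      rw [hak, hbk, hRk, mul_one_div]
      rw [le_div_iff₀ (hρ _)]
      linarith [h1]
    have hDm : ∀ k, k + 1 < N → D i k ≤ D i (k+1) := by
      intro k hk
      have h1 : D i ((⟨k, by omega⟩ : Fin N) : ℕ) = d i (σ i ⟨k, by omega⟩) := hD i ⟨k, by omega⟩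
      have h2 : D i ((⟨k+1, hk⟩ : Fin N) : ℕ) = d i (σ i ⟨k+1, hk⟩) := hD i ⟨k+1, hk⟩
      simp only at h1 h2
      rw [h1, h2]
      exact hsort i (show (⟨k, by omega⟩ : Fin N) ≤ ⟨k+1, hk⟩ by
        rw [Fin.mk_le_mk]; omega)
    have hpre : ∀ k, k < N → ∑ l ∈ Finset.range (k+1), (a l - b l) ≤ 0 := by
      intro k hk
      rw [Finset.sum_sub_distrib]
      by_cases hm : k + 1 ≤ Khat i
      · have : ∑ l ∈ Finset.range (k+1), a l ≤ ∑ l ∈ Finset.range (k+1), b l :=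
          Finset.sum_le_sum fun l hl =>
            hab l (lt_of_lt_of_le (Finset.mem_range.mp hl) hm)
        linarith
      · push_neg at hm
        have hbsum : ∑ l ∈ Finset.range (k+1), b l = 1/(M:ℝ) := by
          rw [Finset.sum_congr rfl (fun l hl => hbg l
            (lt_of_lt_of_le (Finset.mem_range.mp hl) hk))]
          exact hgsum i (k+1) hm
        have hasum : ∑ l ∈ Finset.range (k+1), a l ≤ 1/(M:ℝ) := by
          rw [← ha_total]
          exact Finset.sum_le_sum_of_subset_of_nonneg
            (Finset.range_subset_range.mpr hk) (fun l _ _ => ha_nn l)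
        rw [hbsum]
        linarith
    have key := abel_aux (D i) (fun k => a k - b k) N hDm hpre
    have htot : ∑ k ∈ Finset.range N, (a k - b k) = 0 := by
      rw [Finset.sum_sub_distrib, ha_total, hb_total]; ring
    rw [htot, zero_mul] at key
    have hsplit : ∑ k ∈ Finset.range N, (a k - b k) * D i k
        = ∑ k ∈ Finset.range N, a k * D i k - ∑ k ∈ Finset.range N, b k * D i k := by
      rw [← Finset.sum_sub_distrib]
      exact Finset.sum_congr rfl fun k _ => by ring
    rw [hsplit] at key
    rw [ea, eb]
    linarith
  -- assemble
  refine ⟨part1, ⟨hγ''nn, hγ''row⟩, ?_⟩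
  rw [hL, hL]
  have h1 : (α/C) * (∑ i, ∑ j, γ'' i j * d i j) ≤ (α/C) * (∑ i, ∑ j, γ' i j * d i j) :=
    mul_le_mul_of_nonneg_left (Finset.sum_le_sum fun i _ => hcost i)
      (div_nonneg hα0 hC.le)
  have hsupfinal := le_trans hsup'' hsup'
  have h2 : (1-α) * ((M:ℝ) * ⨆ i, ⨆ j, ρ j * |γ'' i j - (1/ρ j)/((M:ℝ)*sbar)|)
      ≤ (1-α) * ((M:ℝ) * ⨆ i, ⨆ j, ρ j * |γ' i j - (1/ρ j)/((M:ℝ)*sbar)|) :=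
    mul_le_mul_of_nonneg_left
      (mul_le_mul_of_nonneg_left hsupfinal (Nat.cast_nonneg M)) (by linarith)
  exact add_le_add h1 h2
end

section
/- Let the regularizer be G_KDE and assume s* ≤ s̄/2. Let 0 < s_a < s_b with s_b ≤ s*, s_b ∈ 𝒮, no element of 𝒮 lying strictly between s_a and s_b, and s_1^i ≤ s_a for at least one i ∈ [M]. Then L(γ^{(s_b)}) ≤ L(γ^{(s_a)}), where γ^{(s)} denotes the water-filling transport at level s. -/
open Finset

private lemma helper_sum {K N : ℕ} (hK : K < N) (a : ℕ → ℝ) (b : ℝ) :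
    ∑ k ∈ Finset.range N, (if k < K then a k else if k = K then b else 0)
      = (∑ k ∈ Finset.range K, a k) + b := by
  have h1 : ∑ k ∈ Finset.range N, (if k < K then a k else if k = K then b else 0)
      = ∑ k ∈ Finset.range (K+1), (if k < K then a k else if k = K then b else 0) := by
    refine (Finset.sum_subset (Finset.range_subset_range.mpr hK) (fun x _ hx => ?_)).symm
    simp only [Finset.mem_range, not_lt] at hx
    have h2 : ¬ x < K := by omega
    have h3 : x ≠ K := by omega
    simp [h2, h3]
  rw [h1, Finset.sum_range_succ]
  congr 1
  · exact Finset.sum_congr rfl (fun x hx => by simp [Finset.mem_range.mp hx])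
  · simp


set_option maxHeartbeats 1000000 in
/-- Third case of the proof of Theorem 2: moving from a water-filling transport at level
`s_a` to the one at the next level `s_b ∈ 𝒮` (with `s_b ≤ s*` and no element of `𝒮`
strictly between) does not increase the `G_KDE`-regularized objective. -/
theorem stmt_13 (M N : ℕ) (hM : 1 ≤ M) (hN : 1 ≤ N)
    (d : Fin M → Fin N → ℝ) (hd : ∀ i j, 0 ≤ d i j)
    (C α : ℝ) (hC : 0 < C) (hα0 : 0 ≤ α) (hα1 : α < 1)
    (σ : Fin M → Equiv.Perm (Fin N))
    (hsort : ∀ i, Monotone fun k => d i (σ i k))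
    (ρ : Fin N → ℝ) (hρ : ∀ j, 0 < ρ j)
    (sbar : ℝ) (hsbar : sbar = ∑ j, 1 / ρ j)
    -- `D i l` / `R i l` : sorted distances and inverse densities (0-indexed position `l`)
    (D : Fin M → ℕ → ℝ) (hD : ∀ i (l : Fin N), D i (l : ℕ) = d i (σ i l))
    (R : Fin M → ℕ → ℝ) (hR : ∀ i (l : Fin N), R i (l : ℕ) = 1 / ρ (σ i l))
    -- `S i k` is the paper's `s_k^i`
    (S : Fin M → ℕ → ℝ) (hS : ∀ i k, k ≤ N → S i k = ∑ l ∈ Finset.range k, R i l)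
    -- the step functions `c_i` and their sum `c`
    (ci : Fin M → ℝ → ℝ)
    (hci0 : ∀ i (s : ℝ), s ≤ S i 1 → ci i s = 0)
    (hci : ∀ i (s : ℝ) (k : ℕ), 2 ≤ k → k ≤ N → S i (k - 1) < s → s ≤ S i k →
      ci i s = ∑ l ∈ Finset.range (k - 1), (D i (k - 1) - D i l) * R i l)
    (c : ℝ → ℝ) (hc : ∀ s, c s = ∑ i, ci i s)
    -- the finite set `𝒮`
    (Scal : Set ℝ)
    (hScal : Scal = insert (0 : ℝ) {x : ℝ | ∃ i : Fin M, ∃ k, 1 ≤ k ∧ k ≤ N ∧ x = S i k})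
    -- `s*` is the largest `s ∈ 𝒮` with `(α/C)·c(s) < (1-α)·M`
    (sstar : ℝ) (hsstar1 : sstar ∈ Scal)
    (hsstar2 : (α / C) * c sstar < (1 - α) * (M : ℝ))
    (hsstar3 : ∀ s ∈ Scal, (α / C) * c s < (1 - α) * (M : ℝ) → s ≤ sstar)
    -- the objective with regularizer `G_KDE`
    (L : (Fin M → Fin N → ℝ) → ℝ)
    (hL : ∀ γ, L γ = (α / C) * (∑ i, ∑ j, γ i j * d i j)
      + (1 - α) * ((M : ℝ) * ⨆ i, ⨆ j, ρ j * |γ i j - (1 / ρ j) / ((M : ℝ) * sbar)|))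
    -- the assumption `s* ≤ s̄/2`
    (hshalf : sstar ≤ sbar / 2)
    -- the two levels `s_a < s_b`
    (sa sb : ℝ) (hsa0 : 0 < sa) (hsab : sa < sb) (hsbstar : sb ≤ sstar)
    (hsbS : sb ∈ Scal)
    (hbetween : ∀ s ∈ Scal, ¬(sa < s ∧ s < sb))
    (hfirst : ∃ i : Fin M, S i 1 ≤ sa)
    -- the water-filling transport at level `s_a`
    (Ka : Fin M → ℕ)
    (hKa1 : ∀ i, Ka i ≤ N - 1)
    (hKa2 : ∀ i, S i (Ka i) ≤ sa)
    (hKa3 : ∀ i k, k ≤ N - 1 → S i k ≤ sa → k ≤ Ka i)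
    (γa : Fin M → Fin N → ℝ)
    (hγa : ∀ i (k : Fin N), γa i (σ i k) =
      if (k : ℕ) < Ka i then 1 / ((M : ℝ) * sa * ρ (σ i k))
      else if (k : ℕ) = Ka i then
        1 / (M : ℝ) - ∑ l ∈ Finset.range (Ka i), R i l / ((M : ℝ) * sa)
      else 0)
    -- the water-filling transport at level `s_b`
    (Kb : Fin M → ℕ)
    (hKb1 : ∀ i, Kb i ≤ N - 1)
    (hKb2 : ∀ i, S i (Kb i) ≤ sb)
    (hKb3 : ∀ i k, k ≤ N - 1 → S i k ≤ sb → k ≤ Kb i)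
    (γb : Fin M → Fin N → ℝ)
    (hγb : ∀ i (k : Fin N), γb i (σ i k) =
      if (k : ℕ) < Kb i then 1 / ((M : ℝ) * sb * ρ (σ i k))
      else if (k : ℕ) = Kb i then
        1 / (M : ℝ) - ∑ l ∈ Finset.range (Kb i), R i l / ((M : ℝ) * sb)
      else 0) :
    L γb ≤ L γa := by
  -- basic positivity
  have hM0 : (0:ℝ) < M := by exact_mod_cast hM
  have hα1' : (0:ℝ) < 1 - α := by linarith
  have hsb0 : (0:ℝ) < sb := lt_trans hsa0 hsab
  have hsstar0 : (0:ℝ) < sstar := lt_of_lt_of_le hsb0 hsbstar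
  have hsbar0 : (0:ℝ) < sbar := by linarith
  -- basic structure
  have hRpos : ∀ i k, k < N → 0 < R i k := by
    intro i k hk
    have := hR i ⟨k, hk⟩
    simp only [Fin.val_mk] at this
    rw [this]
    exact one_div_pos.mpr (hρ _)
  have hDmono : ∀ i k l, k ≤ l → l < N → D i k ≤ D i l := by
    intro i k l hkl hl
    have hk : k < N := lt_of_le_of_lt hkl hl
    have e1 := hD i ⟨k, hk⟩
    have e2 := hD i ⟨l, hl⟩
    simp only [Fin.val_mk] at e1 e2
    rw [e1, e2]
    exact hsort i (by exact_mod_cast hkl)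
  have hD0 : ∀ i k, k < N → 0 ≤ D i k := by
    intro i k hk
    have := hD i ⟨k, hk⟩
    simp only [Fin.val_mk] at this
    rw [this]; exact hd _ _
  have hSmono : ∀ i k l, k ≤ l → l ≤ N → S i k ≤ S i l := by
    intro i k l hkl hl
    rw [hS i k (le_trans hkl hl), hS i l hl]
    refine Finset.sum_le_sum_of_subset_of_nonneg
      (Finset.range_subset_range.mpr hkl) (fun x hx _ => (hRpos i x (lt_of_lt_of_le (Finset.mem_range.mp hx) hl)).le)
  have hSmono' : ∀ i k l, k < l → l ≤ N → S i k < S i l := by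
    intro i k l hkl hl
    rw [hS i k (le_trans hkl.le hl), hS i l hl]
    refine Finset.sum_lt_sum_of_subset (Finset.range_subset_range.mpr hkl.le)
      (Finset.mem_range.mpr hkl) (by simp) (hRpos i k (lt_of_lt_of_le hkl hl))
      (fun x hx _ => (hRpos i x (lt_of_lt_of_le (Finset.mem_range.mp hx) hl)).le)
  have hSN : ∀ i, S i N = sbar := by
    intro i
    rw [hS i N le_rfl, hsbar, ← Fin.sum_univ_eq_sum_range (fun l => R i l) N]
    rw [← Equiv.sum_comp (σ i) (fun j => 1 / ρ j)]
    exact Finset.sum_congr rfl (fun l _ => hR i l)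
  have hS0 : ∀ i, S i 0 = 0 := fun i => by rw [hS i 0 (Nat.zero_le _)]; simp
  have hSstep : ∀ i k, k < N → S i (k+1) = S i k + R i k := by
    intro i k hk
    rw [hS i (k+1) hk, hS i k hk.le, Finset.sum_range_succ]
  obtain ⟨i0, hi0⟩ := hfirst
  -- N ≥ 2
  have hN2 : 2 ≤ N := by
    by_contra h
    have hN1 : N = 1 := by omega
    have : S i0 1 = sbar := by rw [← hN1]; exact hSN i0
    rw [this] at hi0
    linarith
  have hKaN : ∀ i, Ka i < N := fun i => lt_of_le_of_lt (hKa1 i) (by omega)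
  have hKbN : ∀ i, Kb i < N := fun i => lt_of_le_of_lt (hKb1 i) (by omega)
  have hKa_i0 : 1 ≤ Ka i0 := hKa3 i0 1 (by omega) hi0
  have hKb_i0 : 1 ≤ Kb i0 := hKb3 i0 1 (by omega) (le_trans hi0 hsab.le)
  -- strict upper bounds on the filled level
  have hSaKa : ∀ i, sa < S i (Ka i + 1) := by
    intro i
    by_cases h : Ka i + 1 ≤ N - 1
    · by_contra hcon
      push_neg at hcon
      have := hKa3 i (Ka i + 1) h hcon
      omega
    · have : Ka i + 1 = N := by have := hKa1 i; omega
      rw [this, hSN i]; linarith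
  have hSbKb : ∀ i, sb < S i (Kb i + 1) := by
    intro i
    by_cases h : Kb i + 1 ≤ N - 1
    · by_contra hcon
      push_neg at hcon
      have := hKb3 i (Kb i + 1) h hcon
      omega
    · have : Kb i + 1 = N := by have := hKb1 i; omega
      rw [this, hSN i]; linarith
  have hmemS : ∀ i k, 1 ≤ k → k ≤ N → S i k ∈ Scal := by
    intro i k h1 h2
    rw [hScal]
    exact Set.mem_insert_iff.mpr (Or.inr ⟨i, k, h1, h2, rfl⟩)
  have hSbKa : ∀ i, sb ≤ S i (Ka i + 1) := by
    intro i
    have hmem := hmemS i (Ka i + 1) (by omega) (hKaN i)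
    have := hbetween _ hmem
    by_contra hcon
    push_neg at hcon
    exact this ⟨hSaKa i, hcon⟩
  -- relation between Ka and Kb
  have hKab1 : ∀ i, Ka i ≤ Kb i := fun i =>
    hKb3 i (Ka i) (hKa1 i) (le_trans (hKa2 i) hsab.le)
  have hKab2 : ∀ i, Kb i ≤ Ka i + 1 := by
    intro i
    by_contra h
    push_neg at h
    have h1 : S i (Ka i + 1) < S i (Kb i) := hSmono' i (Ka i + 1) (Kb i) h (hKbN i).le
    have h2 := hKb2 i
    have h3 := hSbKa i
    linarith
  -- rewrite γa in clean form
  have hγa' : ∀ i (k : Fin N), γa i (σ i k) =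
      if (k : ℕ) < Ka i then R i k / ((M:ℝ) * sa)
      else if (k : ℕ) = Ka i then (sa - S i (Ka i)) / ((M:ℝ) * sa)
      else 0 := by
    intro i k
    rw [hγa i k]
    have hρ0 : ρ (σ i k) ≠ 0 := ne_of_gt (hρ _)
    have hM0' : (M:ℝ) ≠ 0 := ne_of_gt hM0
    have hsa0' : sa ≠ 0 := ne_of_gt hsa0
    split_ifs with h1 h2
    · rw [hR i k]
      field_simp
    · rw [← Finset.sum_div, ← hS i (Ka i) (hKaN i).le]
      field_simp
    · rfl
  have hγb'' : ∀ i (k : Fin N), γb i (σ i k) =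
      if (k : ℕ) < Kb i then R i k / ((M:ℝ) * sb)
      else if (k : ℕ) = Kb i then (sb - S i (Kb i)) / ((M:ℝ) * sb)
      else 0 := by
    intro i k
    rw [hγb i k]
    have hρ0 : ρ (σ i k) ≠ 0 := ne_of_gt (hρ _)
    have hM0' : (M:ℝ) ≠ 0 := ne_of_gt hM0
    have hsb0' : sb ≠ 0 := ne_of_gt hsb0
    split_ifs with h1 h2
    · rw [hR i k]
      field_simp
    · rw [← Finset.sum_div, ← hS i (Kb i) (hKbN i).le]
      field_simp
    · rfl
  -- γb expressed with Ka
  have hγb' : ∀ i (k : Fin N), γb i (σ i k) =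
      if (k : ℕ) < Ka i then R i k / ((M:ℝ) * sb)
      else if (k : ℕ) = Ka i then (sb - S i (Ka i)) / ((M:ℝ) * sb)
      else 0 := by
    intro i k
    rw [hγb'' i k]
    by_cases hcase : Kb i = Ka i
    · rw [hcase]
    · have heq : Kb i = Ka i + 1 := by have := hKab1 i; have := hKab2 i; omega
      have hSeq : S i (Kb i) = sb := le_antisymm (hKb2 i) (by rw [heq]; exact hSbKa i)
      have hstep : sb = S i (Ka i) + R i (Ka i) := by
        rw [← hSeq, heq]; exact hSstep i (Ka i) (hKaN i)
      rcases lt_trichotomy ((k:ℕ)) (Ka i) with h | h | h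
      · have h' : (k:ℕ) < Kb i := by omega
        simp [h, h']
      · have h' : (k:ℕ) < Kb i := by omega
        have hna : ¬ (k:ℕ) < Ka i := by omega
        rw [if_pos h', if_neg hna, if_pos h, h]
        rw [show sb - S i (Ka i) = R i (Ka i) by linarith]
      · have hna : ¬ (k:ℕ) < Ka i := by omega
        have hne : (k:ℕ) ≠ Ka i := by omega
        have h3 : ¬ (k:ℕ) < Kb i := by omega
        rw [if_neg hna, if_neg hne, if_neg h3]
        by_cases h4 : (k:ℕ) = Kb i
        · rw [if_pos h4, hSeq]
          ring
        · rw [if_neg h4]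
  have hN0 : 0 < N := by omega
  have hMne : (M:ℝ) ≠ 0 := ne_of_gt hM0
  have hsbarne : sbar ≠ 0 := ne_of_gt hsbar0
  -- the value of L on a water-filling transport with profile Ka at level s
  have main : ∀ (s : ℝ) (γ : Fin M → Fin N → ℝ), 0 < s → s ≤ sbar / 2 →
      (∀ i, S i (Ka i) ≤ s) → (∀ i, s ≤ S i (Ka i + 1)) →
      (∀ i (k : Fin N), γ i (σ i k) =
        if (k : ℕ) < Ka i then R i k / ((M:ℝ) * s)
        else if (k : ℕ) = Ka i then (s - S i (Ka i)) / ((M:ℝ) * s) else 0) →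
      L γ = (α / C) * ((∑ i, D i (Ka i)) / (M:ℝ)
          - (∑ i, ∑ k ∈ Finset.range (Ka i), (D i (Ka i) - D i k) * R i k) / ((M:ℝ) * s))
        + (1 - α) * (1/s - 1/sbar) := by
    intro s γ hs0 hs2 hlow hup hform
    have hsne : s ≠ 0 := ne_of_gt hs0
    have hMs : (0:ℝ) < (M:ℝ) * s := mul_pos hM0 hs0
    have hMsb : (0:ℝ) < (M:ℝ) * sbar := mul_pos hM0 hsbar0
    -- entry bounds
    have hbound : ∀ i (k : Fin N), 0 ≤ γ i (σ i k) ∧ γ i (σ i k) ≤ R i (k:ℕ) / ((M:ℝ) * s) := by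
      intro i k
      rw [hform i k]
      split_ifs with h1 h2
      · exact ⟨(div_pos (hRpos i k k.isLt) hMs).le, le_refl _⟩
      · constructor
        · exact div_nonneg (by linarith [hlow i]) hMs.le
        · have hst := hSstep i (Ka i) (hKaN i)
          have hu := hup i
          rw [h2]
          gcongr
          linarith
      · exact ⟨le_refl _, div_nonneg (hRpos i k k.isLt).le hMs.le⟩
    have hboundj : ∀ i j, 0 ≤ γ i j ∧ ρ j * γ i j ≤ 1/((M:ℝ)*s) := by
      intro i j
      have hk := hbound i ((σ i).symm j)
      rw [Equiv.apply_symm_apply] at hk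
      have hRj : R i ((((σ i).symm j : Fin N)) : ℕ) = 1 / ρ j := by
        rw [hR i ((σ i).symm j), Equiv.apply_symm_apply]
      rw [hRj] at hk
      refine ⟨hk.1, ?_⟩
      have := mul_le_mul_of_nonneg_left hk.2 (hρ j).le
      calc ρ j * γ i j ≤ ρ j * (1 / ρ j / ((M:ℝ)*s)) := this
      _ = 1/((M:ℝ)*s) := by
          field_simp
          exact div_self (ne_of_gt (hρ j))
    -- upper bound for the sup values
    have key3 : 1/((M:ℝ)*sbar) ≤ 1/((M:ℝ)*s) - 1/((M:ℝ)*sbar) := by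
      have e : 1/((M:ℝ)*s) - 1/((M:ℝ)*sbar) - 1/((M:ℝ)*sbar) = (sbar - 2*s)/(((M:ℝ)*s)*sbar) := by
        field_simp
        ring
      have h2 : 0 ≤ (sbar - 2*s)/(((M:ℝ)*s)*sbar) :=
        div_nonneg (by linarith) (by positivity)
      linarith
    have hval : ∀ i j, ρ j * |γ i j - 1 / ρ j / ((M:ℝ) * sbar)| ≤ 1/((M:ℝ)*s) - 1/((M:ℝ)*sbar) := by
      intro i j
      obtain ⟨h0, h1⟩ := hboundj i j
      have hρj := hρ j
      have habs : ρ j * |γ i j - 1 / ρ j / ((M:ℝ) * sbar)| = |ρ j * γ i j - 1/((M:ℝ)*sbar)| := by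
        have e : ρ j * γ i j - 1/((M:ℝ)*sbar) = ρ j * (γ i j - 1 / ρ j / ((M:ℝ) * sbar)) := by
          field_simp
        rw [e, abs_mul, abs_of_pos hρj]
      rw [habs, abs_sub_le_iff]
      have hnn : 0 ≤ ρ j * γ i j := mul_nonneg hρj.le h0
      constructor
      · linarith
      · linarith
    -- the sup is attained
    have hach : ρ (σ i0 ⟨0, hN0⟩) * |γ i0 (σ i0 ⟨0, hN0⟩) - 1 / ρ (σ i0 ⟨0, hN0⟩) / ((M:ℝ) * sbar)|
        = 1/((M:ℝ)*s) - 1/((M:ℝ)*sbar) := by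
      have h0lt : ((⟨0, hN0⟩ : Fin N) : ℕ) < Ka i0 := by simpa using (Nat.succ_le_iff.mp hKa_i0)
      have e := hform i0 ⟨0, hN0⟩
      rw [if_pos h0lt, hR i0 ⟨0, hN0⟩] at e
      rw [e]
      have e2 : (1 / ρ (σ i0 ⟨0, hN0⟩)) / ((M:ℝ)*s) - 1 / ρ (σ i0 ⟨0, hN0⟩) / ((M:ℝ) * sbar)
          = (1 / ρ (σ i0 ⟨0, hN0⟩)) * (1/((M:ℝ)*s) - 1/((M:ℝ)*sbar)) := by
        ring
      have hX0 : (0:ℝ) ≤ 1/((M:ℝ)*s) - 1/((M:ℝ)*sbar) := by linarith [key3, (by positivity : (0:ℝ) < 1/((M:ℝ)*sbar))]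
      rw [e2, abs_mul, abs_of_pos (one_div_pos.mpr (hρ _)), abs_of_nonneg hX0,
        ← mul_assoc, mul_one_div_cancel (ne_of_gt (hρ _)), one_mul]
    have hsup : (⨆ i, ⨆ j, ρ j * |γ i j - 1 / ρ j / ((M:ℝ) * sbar)|)
        = 1/((M:ℝ)*s) - 1/((M:ℝ)*sbar) := by
      haveI : Nonempty (Fin M) := ⟨i0⟩
      haveI : Nonempty (Fin N) := ⟨⟨0, hN0⟩⟩
      apply le_antisymm
      · exact ciSup_le fun i => ciSup_le fun j => hval i j
      · have b1 : ρ (σ i0 ⟨0, hN0⟩) * |γ i0 (σ i0 ⟨0, hN0⟩) - 1 / ρ (σ i0 ⟨0, hN0⟩) / ((M:ℝ) * sbar)|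
            ≤ ⨆ j, ρ j * |γ i0 j - 1 / ρ j / ((M:ℝ) * sbar)| :=
          le_ciSup (f := fun j => ρ j * |γ i0 j - 1 / ρ j / ((M:ℝ) * sbar)|)
            (Set.Finite.bddAbove (Set.finite_range _)) (σ i0 ⟨0, hN0⟩)
        have b2 : (⨆ j, ρ j * |γ i0 j - 1 / ρ j / ((M:ℝ) * sbar)|)
            ≤ ⨆ i, ⨆ j, ρ j * |γ i j - 1 / ρ j / ((M:ℝ) * sbar)| :=
          le_ciSup (f := fun i => ⨆ j, ρ j * |γ i j - 1 / ρ j / ((M:ℝ) * sbar)|)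
            (Set.Finite.bddAbove (Set.finite_range _)) i0
        rw [← hach]
        exact le_trans b1 b2
    -- the transport cost row by row
    have hcost : ∀ i, ∑ j, γ i j * d i j
        = D i (Ka i)/(M:ℝ)
          - (∑ k ∈ Finset.range (Ka i), (D i (Ka i) - D i k) * R i k)/((M:ℝ)*s) := by
      intro i
      have e1 : ∑ j, γ i j * d i j = ∑ k : Fin N, γ i (σ i k) * d i (σ i k) :=
        (Equiv.sum_comp (σ i) (fun j => γ i j * d i j)).symm
      have e2 : ∀ k : Fin N, γ i (σ i k) * d i (σ i k)
          = (fun m => if m < Ka i then D i m * R i m / ((M:ℝ)*s)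
              else if m = Ka i then D i (Ka i) * (s - S i (Ka i)) / ((M:ℝ)*s) else 0) ((k:ℕ)) := by
        intro k
        rw [hform i k, ← hD i k]
        by_cases h1 : (k:ℕ) < Ka i
        · simp only [h1, if_true]
          ring
        · by_cases h2 : (k:ℕ) = Ka i
          · simp only [h2, lt_self_iff_false, if_false, if_true, eq_self_iff_true]
            ring
          · simp [h1, h2]
      rw [e1, Finset.sum_congr rfl (fun k _ => e2 k),
        Fin.sum_univ_eq_sum_range (fun m => if m < Ka i then D i m * R i m / ((M:ℝ)*s)
              else if m = Ka i then D i (Ka i) * (s - S i (Ka i)) / ((M:ℝ)*s) else 0) N,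
        helper_sum (hKaN i)]
      have e3 : ∑ k ∈ Finset.range (Ka i), (D i (Ka i) - D i k) * R i k
          = D i (Ka i) * S i (Ka i) - ∑ k ∈ Finset.range (Ka i), D i k * R i k := by
        rw [hS i (Ka i) (hKaN i).le, Finset.mul_sum, ← Finset.sum_sub_distrib]
        exact Finset.sum_congr rfl (fun k _ => by ring)
      rw [e3, ← Finset.sum_div]
      field_simp
      ring
    rw [hL γ, hsup, Finset.sum_congr rfl (fun i (_ : i ∈ Finset.univ) => hcost i),
      Finset.sum_sub_distrib, ← Finset.sum_div, ← Finset.sum_div]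
    generalize (∑ i, D i (Ka i)) = Qv
    generalize (∑ i, ∑ k ∈ Finset.range (Ka i), (D i (Ka i) - D i k) * R i k) = Ev
    have em : ((M:ℝ)) * (1/((M:ℝ)*s) - 1/((M:ℝ)*sbar)) = 1/s - 1/sbar := by
      rw [mul_sub, one_div ((M:ℝ)*s), one_div ((M:ℝ)*sbar), mul_inv, mul_inv, ← mul_assoc,
        mul_inv_cancel₀ hMne, one_mul, ← mul_assoc, mul_inv_cancel₀ hMne, one_mul,
        one_div, one_div]
    rw [em]
  -- c sb equals the total "drag" E
  have hci_sb : ∀ i, ci i sb = ∑ k ∈ Finset.range (Ka i), (D i (Ka i) - D i k) * R i k := by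
    intro i
    rcases Nat.eq_zero_or_pos (Ka i) with h0 | h1
    · rw [h0]
      simp only [Finset.range_zero, Finset.sum_empty]
      apply hci0
      have h := hSbKa i
      rw [h0] at h
      simpa using h
    · have h2 : 2 ≤ Ka i + 1 := by omega
      have h3 : S i ((Ka i + 1) - 1) < sb := by
        simpa using lt_of_le_of_lt (hKa2 i) hsab
      have := hci i sb (Ka i + 1) h2 (hKaN i) h3 (hSbKa i)
      simpa using this
  have hcsb : c sb = ∑ i, ∑ k ∈ Finset.range (Ka i), (D i (Ka i) - D i k) * R i k := by
    rw [hc sb]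
    exact Finset.sum_congr rfl (fun i _ => hci_sb i)
  -- monotonicity of each ci between sb and sstar
  have hcimono : ∀ i, ci i sb ≤ ci i sstar := by
    intro i
    have hex : ∃ m, sstar ≤ S i m := ⟨N, by rw [hSN]; linarith⟩
    classical
    have hm1 : sstar ≤ S i (Nat.find hex) := Nat.find_spec hex
    set m := Nat.find hex with hm_def
    have hm2 : ∀ l, l < m → S i l < sstar := fun l hl =>
      lt_of_not_ge (Nat.find_min hex hl)
    have hmN : m ≤ N := Nat.find_min' hex (by rw [hSN]; linarith)
    have hm0 : 1 ≤ m := by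
      by_contra h
      have hm00 : m = 0 := by omega
      have h' := hm1
      rw [hm00] at h'
      rw [hS0 i] at h'
      linarith
    have hKam : Ka i ≤ m - 1 := by
      by_contra hcon
      push_neg at hcon
      have hle : S i m ≤ S i (Ka i) := hSmono i m (Ka i) (by omega) (hKaN i).le
      have := hKa2 i
      linarith
    rcases Nat.lt_or_ge m 2 with hm | hm
    · have hmeq : m = 1 := by omega
      have ha : sstar ≤ S i 1 := by rw [← hmeq]; exact hm1
      rw [hci0 i sstar ha, hci0 i sb (le_trans hsbstar ha)]
    · have hcstar : ci i sstar = ∑ l ∈ Finset.range (m-1), (D i (m-1) - D i l) * R i l :=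
        hci i sstar m hm hmN (hm2 (m-1) (by omega)) hm1
      rw [hcstar, hci_sb i]
      have hmN' : m - 1 < N := by omega
      calc ∑ k ∈ Finset.range (Ka i), (D i (Ka i) - D i k) * R i k
          ≤ ∑ k ∈ Finset.range (Ka i), (D i (m-1) - D i k) * R i k := by
            refine Finset.sum_le_sum (fun k hk => ?_)
            have hkKa : k < Ka i := Finset.mem_range.mp hk
            have hDD : D i (Ka i) ≤ D i (m-1) := hDmono i (Ka i) (m-1) hKam hmN'
            have hRk : 0 ≤ R i k := (hRpos i k (lt_trans hkKa (hKaN i))).le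
            have := mul_le_mul_of_nonneg_right (sub_le_sub_right hDD (D i k)) hRk
            linarith
        _ ≤ ∑ k ∈ Finset.range (m-1), (D i (m-1) - D i k) * R i k := by
            refine Finset.sum_le_sum_of_subset_of_nonneg
              (Finset.range_subset_range.mpr hKam) (fun k hk _ => ?_)
            have hkm : k < m - 1 := Finset.mem_range.mp hk
            exact mul_nonneg (sub_nonneg.mpr (hDmono i k (m-1) hkm.le hmN'))
              (hRpos i k (by omega)).le
  have hmono : c sb ≤ c sstar := by
    rw [hc sb, hc sstar]
    exact Finset.sum_le_sum (fun i _ => hcimono i)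
  have hE1 : (α / C) * (∑ i, ∑ k ∈ Finset.range (Ka i), (D i (Ka i) - D i k) * R i k)
      ≤ (1 - α) * (M:ℝ) := by
    rw [← hcsb]
    calc (α/C) * c sb ≤ (α/C) * c sstar :=
          mul_le_mul_of_nonneg_left hmono (div_nonneg hα0 hC.le)
    _ ≤ (1-α) * (M:ℝ) := hsstar2.le
  have La := main sa γa hsa0 (by linarith) hKa2 (fun i => (hSaKa i).le) hγa'
  have Lb := main sb γb hsb0 (by linarith) (fun i => le_trans (hKa2 i) hsab.le) hSbKa hγb'
  rw [Lb, La]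
  generalize hgen : (∑ i, ∑ k ∈ Finset.range (Ka i), (D i (Ka i) - D i k) * R i k) = Ev
    at hE1 ⊢
  have h1ab : 1/sb ≤ 1/sa := one_div_le_one_div_of_le hsa0 hsab.le
  have hkey : ∀ s : ℝ, (α/C)*((∑ i, D i (Ka i))/(M:ℝ) - Ev/((M:ℝ)*s)) + (1-α)*(1/s - 1/sbar)
      = (α/C)*(∑ i, D i (Ka i))/(M:ℝ) - (1-α)/sbar + (1/s)*((1-α) - (α/C)*Ev/(M:ℝ)) :=
    fun s => by ring
  rw [hkey sb, hkey sa]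
  have hX : 0 ≤ (1-α) - (α/C)*Ev/(M:ℝ) := by
    have h2 : (α/C)*Ev/(M:ℝ) ≤ (1-α) := by
      rw [div_le_iff₀ hM0]
      linarith
    linarith
  have hfin := mul_le_mul_of_nonneg_right h1ab hX
  linarith
end

section
/- Let 0 < s ≤ s̄/2 and suppose s_1^i ≤ s for at least one i ∈ [M]. Then the water-filling transport γ^{(s)} is feasible and G_KDE(γ^{(s)}) = 1/s − 1/s̄; equivalently, max_{i ∈ [M], j ∈ [N]} ρ_j·|γ^{(s)}_{ij} − (1/ρ_j)/(M·s̄)| = 1/(M·s) − 1/(M·s̄). -/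
open Finset

/-- For `0 < s ≤ s̄/2` with `s_1^i ≤ s` for at least one `i`, the water-filling transport
`γ^{(s)}` is feasible and its `G_KDE` value equals `1/s − 1/s̄`. -/
theorem stmt_14 (M N : ℕ) (hM : 1 ≤ M) (hN : 1 ≤ N)
    (d : Fin M → Fin N → ℝ) (hd : ∀ i j, 0 ≤ d i j)
    (σ : Fin M → Equiv.Perm (Fin N))
    (hsort : ∀ i, Monotone fun k => d i (σ i k))
    (ρ : Fin N → ℝ) (hρ : ∀ j, 0 < ρ j)
    (sbar : ℝ) (hsbar : sbar = ∑ j, 1 / ρ j)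
    (R : Fin M → ℕ → ℝ) (hR : ∀ i (l : Fin N), R i (l : ℕ) = 1 / ρ (σ i l))
    (S : Fin M → ℕ → ℝ) (hS : ∀ i k, k ≤ N → S i k = ∑ l ∈ Finset.range k, R i l)
    -- the level `s`
    (s : ℝ) (hs0 : 0 < s) (hshalf : s ≤ sbar / 2)
    (hfirst : ∃ i : Fin M, S i 1 ≤ s)
    -- `K_i(s) = max {k ∈ {0,…,N−1} : s_k^i ≤ s}`
    (Ks : Fin M → ℕ)
    (hKs1 : ∀ i, Ks i ≤ N - 1)
    (hKs2 : ∀ i, S i (Ks i) ≤ s)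
    (hKs3 : ∀ i k, k ≤ N - 1 → S i k ≤ s → k ≤ Ks i)
    -- the water-filling transport `γ^{(s)}`
    (γ : Fin M → Fin N → ℝ)
    (hγ : ∀ i (k : Fin N), γ i (σ i k) =
      if (k : ℕ) < Ks i then 1 / ((M : ℝ) * s * ρ (σ i k))
      else if (k : ℕ) = Ks i then
        1 / (M : ℝ) - ∑ l ∈ Finset.range (Ks i), R i l / ((M : ℝ) * s)
      else 0) :
    ((∀ i j, 0 ≤ γ i j) ∧ (∀ i, ∑ j, γ i j = 1 / (M : ℝ))) ∧
      (⨆ i, ⨆ j, ρ j * |γ i j - (1 / ρ j) / ((M : ℝ) * sbar)|)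
        = 1 / ((M : ℝ) * s) - 1 / ((M : ℝ) * sbar) ∧
      (M : ℝ) * (⨆ i, ⨆ j, ρ j * |γ i j - (1 / ρ j) / ((M : ℝ) * sbar)|)
        = 1 / s - 1 / sbar := by
  haveI : Nonempty (Fin M) := ⟨⟨0, hM⟩⟩
  haveI : Nonempty (Fin N) := ⟨⟨0, hN⟩⟩
  have hM0 : (0:ℝ) < M := by exact_mod_cast hM
  have hsbar0 : 0 < sbar := by
    rw [hsbar]
    exact Finset.sum_pos (fun j _ => div_pos one_pos (hρ j)) Finset.univ_nonempty
  have hssbar : s < sbar := lt_of_le_of_lt hshalf (by linarith)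
  have hT2 : 1 / ((M:ℝ)*sbar) ≤ 1 / ((M:ℝ)*s) - 1 / ((M:ℝ)*sbar) := by
    have h1 : 1 / ((M:ℝ)*sbar) + 1 / ((M:ℝ)*sbar) ≤ 1 / ((M:ℝ)*s) := by
      rw [← add_div, div_le_div_iff₀ (mul_pos hM0 hsbar0) (mul_pos hM0 hs0)]
      nlinarith [mul_le_mul_of_nonneg_left (by linarith : 2*s ≤ sbar) hM0.le]
    linarith
  have hT0 : 0 ≤ 1 / ((M:ℝ)*s) - 1 / ((M:ℝ)*sbar) := by
    have : 0 < 1 / ((M:ℝ)*sbar) := one_div_pos.2 (mul_pos hM0 hsbar0)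
    linarith
  have hKN : ∀ i, Ks i < N := fun i => by have := hKs1 i; omega
  have hSK : ∀ i, S i (Ks i) = ∑ l ∈ Finset.range (Ks i), R i l :=
    fun i => hS i (Ks i) (by have := hKN i; omega)
  have hRval : ∀ i k (h : k < N), R i k = 1 / ρ (σ i ⟨k, h⟩) := fun i k h => hR i ⟨k, h⟩
  -- s ≤ S_{K+1}
  have hsplus : ∀ i, s ≤ S i (Ks i) + R i (Ks i) := by
    intro i
    have hstep : S i (Ks i + 1) = S i (Ks i) + R i (Ks i) := by
      rw [hS i (Ks i + 1) (by have := hKN i; omega), hSK i, Finset.sum_range_succ]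
    by_cases hK1 : Ks i + 1 ≤ N - 1
    · by_contra hcon
      push_neg at hcon
      have := hKs3 i (Ks i + 1) hK1 (by linarith [hstep.le])
      omega
    · -- Ks i = N - 1, so S i (Ks i + 1) = S i N = sbar
      have hKeq : Ks i + 1 = N := by have := hKs1 i; omega
      have hSN : S i N = sbar := by
        rw [hS i N le_rfl, ← Fin.sum_univ_eq_sum_range (fun l => R i l) N]
        rw [hsbar, ← Equiv.sum_comp (σ i) (fun j => 1 / ρ j)]
        exact Finset.sum_congr rfl fun l _ => hR i l
      have : S i (Ks i) + R i (Ks i) = sbar := by rw [← hstep, hKeq, hSN]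
      linarith
  -- residual nonneg
  have hres : ∀ i, 0 ≤ 1/(M:ℝ) - ∑ l ∈ Finset.range (Ks i), R i l / ((M:ℝ)*s) := by
    intro i
    have h1 : (∑ l ∈ Finset.range (Ks i), R i l / ((M:ℝ)*s)) = S i (Ks i) / ((M:ℝ)*s) := by
      rw [hSK i, Finset.sum_div]
    rw [h1]
    have h2 : S i (Ks i) / ((M:ℝ)*s) ≤ 1 / (M:ℝ) := by
      rw [div_le_div_iff₀ (mul_pos hM0 hs0) hM0]
      nlinarith [mul_le_mul_of_nonneg_right (hKs2 i) hM0.le]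
    linarith
  -- residual upper bound
  have hresub : ∀ i, ρ (σ i ⟨Ks i, hKN i⟩) *
      (1/(M:ℝ) - ∑ l ∈ Finset.range (Ks i), R i l / ((M:ℝ)*s)) ≤ 1 / ((M:ℝ)*s) := by
    intro i
    set ρk := ρ (σ i ⟨Ks i, hKN i⟩) with hρk
    have hρk0 : 0 < ρk := hρ _
    have h1 : (∑ l ∈ Finset.range (Ks i), R i l / ((M:ℝ)*s)) = S i (Ks i) / ((M:ℝ)*s) := by
      rw [hSK i, Finset.sum_div]
    have key : ρk * (s - S i (Ks i)) ≤ 1 := by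
      have h2 : s - S i (Ks i) ≤ 1 / ρk := by
        have := hsplus i
        rw [hRval i (Ks i) (hKN i)] at this
        linarith
      have h3 := mul_le_mul_of_nonneg_left h2 hρk0.le
      rwa [mul_one_div, div_self (ne_of_gt hρk0)] at h3
    rw [h1]
    have e : 1/(M:ℝ) - S i (Ks i) / ((M:ℝ)*s) = (s - S i (Ks i)) / ((M:ℝ)*s) := by
      field_simp [hM0.ne', hs0.ne']
    rw [e]
    calc ρk * ((s - S i (Ks i)) / ((M:ℝ)*s)) = (ρk * (s - S i (Ks i))) / ((M:ℝ)*s) := by ring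
      _ ≤ 1 / ((M:ℝ)*s) :=
        (div_le_div_iff_of_pos_right (mul_pos hM0 hs0)).2 key
  -- value on the flat part
  have hval : ∀ i (k : Fin N), (k:ℕ) < Ks i →
      ρ (σ i k) * |γ i (σ i k) - (1 / ρ (σ i k)) / ((M:ℝ)*sbar)|
        = 1 / ((M:ℝ)*s) - 1 / ((M:ℝ)*sbar) := by
    intro i k hk
    have hρk0 : 0 < ρ (σ i k) := hρ _
    rw [hγ i k, if_pos hk]
    have e : 1/((M:ℝ)*s*ρ (σ i k)) - (1 / ρ (σ i k)) / ((M:ℝ)*sbar)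
        = (1/((M:ℝ)*s) - 1/((M:ℝ)*sbar)) / ρ (σ i k) := by
      field_simp [hM0.ne', hs0.ne', hsbar0.ne', hρk0.ne']
      all_goals ring
    rw [e, abs_div, abs_of_pos hρk0, abs_of_nonneg hT0]
    field_simp [hρk0.ne']
  -- nonnegativity
  have hnonneg : ∀ i j, 0 ≤ γ i j := by
    intro i j
    obtain ⟨k, rfl⟩ : ∃ k, σ i k = j := ⟨(σ i).symm j, (σ i).apply_symm_apply j⟩
    rw [hγ i k]
    split_ifs with h1 h2
    · exact le_of_lt (one_div_pos.2 (mul_pos (mul_pos hM0 hs0) (hρ _)))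
    · exact hres i
    · exact le_refl 0
  -- row sums
  have hsum : ∀ i, ∑ j, γ i j = 1 / (M:ℝ) := by
    intro i
    rw [← Equiv.sum_comp (σ i) (fun j => γ i j)]
    have hg : ∀ k : Fin N, γ i (σ i k) =
        (fun k : ℕ => if h : k < N then γ i (σ i ⟨k, h⟩) else 0) (k : ℕ) := by
      intro k; simp [k.isLt]
    rw [Finset.sum_congr rfl (fun k _ => hg k),
      Fin.sum_univ_eq_sum_range (fun k : ℕ => if h : k < N then γ i (σ i ⟨k, h⟩) else 0) N]
    have hzero : ∀ x ∈ Finset.range N, x ∉ Finset.range (Ks i + 1) →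
        (if h : x < N then γ i (σ i ⟨x, h⟩) else 0) = 0 := by
      intro k hkN hknot
      rw [Finset.mem_range] at hkN
      rw [Finset.mem_range, not_lt] at hknot
      rw [dif_pos hkN, hγ i ⟨k, hkN⟩, if_neg (by simp; omega), if_neg (by simp; omega)]
    rw [← Finset.sum_subset (Finset.range_subset_range.2 (hKN i)) hzero]
    rw [Finset.sum_range_succ]
    have hlast : (if h : Ks i < N then γ i (σ i ⟨Ks i, h⟩) else 0)
        = 1 / (M:ℝ) - ∑ l ∈ Finset.range (Ks i), R i l / ((M:ℝ)*s) := by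
      rw [dif_pos (hKN i), hγ i ⟨Ks i, hKN i⟩]
      simp
    rw [hlast]
    have hflat : ∀ k ∈ Finset.range (Ks i),
        (if h : k < N then γ i (σ i ⟨k, h⟩) else 0) = R i k / ((M:ℝ)*s) := by
      intro k hk
      rw [Finset.mem_range] at hk
      have hkN : k < N := lt_trans hk (hKN i)
      have hρk0 : 0 < ρ (σ i ⟨k, hkN⟩) := hρ _
      rw [dif_pos hkN, hγ i ⟨k, hkN⟩, if_pos hk, hRval i k hkN]
      rw [div_div, mul_comm (ρ (σ i ⟨k, hkN⟩)) ((M:ℝ)*s)]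
    rw [Finset.sum_congr rfl hflat]
    ring
  -- upper bound for all entries
  have hle : ∀ i j, ρ j * |γ i j - (1 / ρ j) / ((M:ℝ)*sbar)|
      ≤ 1 / ((M:ℝ)*s) - 1 / ((M:ℝ)*sbar) := by
    intro i j
    obtain ⟨k, rfl⟩ : ∃ k, σ i k = j := ⟨(σ i).symm j, (σ i).apply_symm_apply j⟩
    have hρk0 : 0 < ρ (σ i k) := hρ _
    rcases lt_trichotomy (k:ℕ) (Ks i) with h | h | h
    · exact (hval i k h).le
    · rw [hγ i k, if_neg (by omega), if_pos h]
      have hkeq : k = ⟨Ks i, hKN i⟩ := Fin.ext h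
      obtain ⟨A, hA⟩ : ∃ A, 1/(M:ℝ) - ∑ l ∈ Finset.range (Ks i), R i l / ((M:ℝ)*s) = A :=
        ⟨_, rfl⟩
      rw [hA]
      have hA0 : 0 ≤ A := hA ▸ hres i
      have hAub : ρ (σ i k) * A ≤ 1 / ((M:ℝ)*s) := by
        rw [← hA, hkeq]; exact hresub i
      have emul : ρ (σ i k) * (A - (1 / ρ (σ i k)) / ((M:ℝ)*sbar))
          = ρ (σ i k) * A - 1 / ((M:ℝ)*sbar) := by
        rw [mul_sub]
        congr 1
        rw [← mul_div_assoc, mul_one_div, div_self hρk0.ne']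
      have e : ρ (σ i k) * |A - (1 / ρ (σ i k)) / ((M:ℝ)*sbar)|
          = |ρ (σ i k) * A - 1 / ((M:ℝ)*sbar)| := by
        rw [← emul, abs_mul, abs_of_pos hρk0]
      rw [e]
      rw [abs_le]
      refine ⟨?_, ?_⟩
      · linarith [hT2, mul_nonneg hρk0.le hA0]
      · linarith [hAub, hT2]
    · rw [hγ i k, if_neg (by omega), if_neg (by omega)]
      have e : ρ (σ i k) * |0 - (1 / ρ (σ i k)) / ((M:ℝ)*sbar)| = 1 / ((M:ℝ)*sbar) := by
        rw [zero_sub, abs_neg,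
          abs_of_nonneg (le_of_lt (div_pos (one_div_pos.2 (hρ _)) (mul_pos hM0 hsbar0)))]
        rw [← mul_div_assoc, mul_one_div, div_self hρk0.ne']
      rw [e]
      exact hT2
  -- attainment
  have hex : ∃ i j, ρ j * |γ i j - (1 / ρ j) / ((M:ℝ)*sbar)|
      = 1 / ((M:ℝ)*s) - 1 / ((M:ℝ)*sbar) := by
    have hN2 : 2 ≤ N := by
      by_contra hcon
      have hN1 : N = 1 := by omega
      subst hN1
      obtain ⟨i, h1⟩ := hfirst
      have hS1 : S i 1 = 1 / ρ (σ i 0) := by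
        rw [hS i 1 le_rfl, Finset.sum_range_one]
        simpa using hR i 0
      have hsb : sbar = 1 / ρ (σ i 0) := by
        rw [hsbar]
        rw [show (σ i 0) = 0 from Subsingleton.elim _ _]
        simp
      rw [hS1, ← hsb] at h1
      linarith
    obtain ⟨i, h1⟩ := hfirst
    have hK1 : 1 ≤ Ks i := hKs3 i 1 (by omega) h1
    exact ⟨i, σ i ⟨0, by omega⟩, hval i ⟨0, by omega⟩ (by simp; omega)⟩
  -- the supremum
  have hsup : (⨆ i, ⨆ j, ρ j * |γ i j - (1 / ρ j) / ((M:ℝ)*sbar)|)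
      = 1 / ((M:ℝ)*s) - 1 / ((M:ℝ)*sbar) := by
    apply le_antisymm
    · exact ciSup_le fun i => ciSup_le fun j => hle i j
    · obtain ⟨i, j, hij⟩ := hex
      calc 1 / ((M:ℝ)*s) - 1 / ((M:ℝ)*sbar)
          = ρ j * |γ i j - (1 / ρ j) / ((M:ℝ)*sbar)| := hij.symm
        _ ≤ ⨆ j, ρ j * |γ i j - (1 / ρ j) / ((M:ℝ)*sbar)| :=
            le_ciSup (f := fun j => ρ j * |γ i j - (1 / ρ j) / ((M:ℝ)*sbar)|)
              (Finite.bddAbove_range _) j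
        _ ≤ ⨆ i, ⨆ j, ρ j * |γ i j - (1 / ρ j) / ((M:ℝ)*sbar)| :=
            le_ciSup (f := fun i => ⨆ j, ρ j * |γ i j - (1 / ρ j) / ((M:ℝ)*sbar)|)
              (Finite.bddAbove_range _) i
  refine ⟨⟨hnonneg, hsum⟩, hsup, ?_⟩
  rw [hsup]
  field_simp [hM0.ne', hs0.ne', hsbar0.ne']
end

section
/- Assume N > 1 and α < 1, and suppose ρ_j = 1 for every j ∈ [N]. Then: (i) G_KDE(γ) = G∞(γ) = M·max_{i,j} |γ_{ij} − 1/(MN)| for every γ ∈ ℝ^{M×N}; (ii) s_k^i = k for all i, k, and s* equals K = max{k ∈ [N] : (α/C)·Σ_{i=1}^{M} Σ_{l=1}^{k−1} (d_{i j_k^i} − d_{i j_l^i}) < (1−α)·M}; and (iii) if K ≤ N − 1, the matrix γ* of the KDE construction satisfies γ*_{ij} = 1/(K·M) if j ∈ {j_1^i, …, j_K^i} and γ*_{ij} = 0 otherwise. -/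
open Finset

/-- Theorem 1 is the special case of Theorem 2 with all densities equal to `1`:
(i) `G_KDE = G∞`; (ii) `s_k^i = k` and `s* = K`; (iii) the KDE water-filling transport
coincides with the KNN-uniform transport. -/
theorem stmt_15 (M N : ℕ) (hM : 1 ≤ M) (hN : 1 < N)
    (d : Fin M → Fin N → ℝ) (hd : ∀ i j, 0 ≤ d i j)
    (C α : ℝ) (hC : 0 < C) (hα0 : 0 ≤ α) (hα1 : α < 1)
    (σ : Fin M → Equiv.Perm (Fin N))
    (hsort : ∀ i, Monotone fun k => d i (σ i k))
    (ρ : Fin N → ℝ) (hρ : ∀ j, 0 < ρ j)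
    (sbar : ℝ) (hsbar : sbar = ∑ j, 1 / ρ j)
    -- `D i l` / `R i l` : sorted distances and inverse densities (0-indexed position `l`)
    (D : Fin M → ℕ → ℝ) (hD : ∀ i (l : Fin N), D i (l : ℕ) = d i (σ i l))
    (R : Fin M → ℕ → ℝ) (hR : ∀ i (l : Fin N), R i (l : ℕ) = 1 / ρ (σ i l))
    -- `S i k` is the paper's `s_k^i`
    (S : Fin M → ℕ → ℝ) (hS : ∀ i k, k ≤ N → S i k = ∑ l ∈ Finset.range k, R i l)
    -- the step functions `c_i` and their sum `c`
    (ci : Fin M → ℝ → ℝ)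
    (hci0 : ∀ i (s : ℝ), s ≤ S i 1 → ci i s = 0)
    (hci : ∀ i (s : ℝ) (k : ℕ), 2 ≤ k → k ≤ N → S i (k - 1) < s → s ≤ S i k →
      ci i s = ∑ l ∈ Finset.range (k - 1), (D i (k - 1) - D i l) * R i l)
    (c : ℝ → ℝ) (hc : ∀ s, c s = ∑ i, ci i s)
    -- the finite set `𝒮`
    (Scal : Set ℝ)
    (hScal : Scal = insert (0 : ℝ) {x : ℝ | ∃ i : Fin M, ∃ k, 1 ≤ k ∧ k ≤ N ∧ x = S i k})
    -- `s*` is the largest `s ∈ 𝒮` with `(α/C)·c(s) < (1-α)·M`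
    (sstar : ℝ) (hsstar1 : sstar ∈ Scal)
    (hsstar2 : (α / C) * c sstar < (1 - α) * (M : ℝ))
    (hsstar3 : ∀ s ∈ Scal, (α / C) * c s < (1 - α) * (M : ℝ) → s ≤ sstar)
    -- `K_i = max {k ∈ {0,…,N−1} : s_k^i ≤ s*}`
    (Ki : Fin M → ℕ)
    (hKi1 : ∀ i, Ki i ≤ N - 1)
    (hKi2 : ∀ i, S i (Ki i) ≤ sstar)
    (hKi3 : ∀ i k, k ≤ N - 1 → S i k ≤ sstar → k ≤ Ki i)
    -- the water-filling transport `γ*`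
    (γstar : Fin M → Fin N → ℝ)
    (hγstar : ∀ i (k : Fin N), γstar i (σ i k) =
      if (k : ℕ) < Ki i then 1 / ((M : ℝ) * sstar * ρ (σ i k))
      else if (k : ℕ) = Ki i then
        1 / (M : ℝ) - ∑ l ∈ Finset.range (Ki i), R i l / ((M : ℝ) * sstar)
      else 0)
    -- all densities are equal to `1`
    (hρ1 : ∀ j, ρ j = 1)
    -- `K` is the largest `k ∈ [N]` satisfying the `G∞` trade-off condition
    (K : ℕ) (hK1 : 1 ≤ K) (hK2 : K ≤ N)
    (hKcond : (α / C) * (∑ i, ∑ l ∈ Finset.range (K - 1), (D i (K - 1) - D i l))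
      < (1 - α) * (M : ℝ))
    (hKmax : ∀ k, 1 ≤ k → k ≤ N →
      (α / C) * (∑ i, ∑ l ∈ Finset.range (k - 1), (D i (k - 1) - D i l)) < (1 - α) * (M : ℝ) →
      k ≤ K) :
    -- (i) `G_KDE` coincides with `G∞`
    (∀ γ : Fin M → Fin N → ℝ,
      (M : ℝ) * (⨆ i, ⨆ j, ρ j * |γ i j - (1 / ρ j) / ((M : ℝ) * sbar)|)
        = (M : ℝ) * ⨆ i, ⨆ j, |γ i j - 1 / ((M : ℝ) * N)|) ∧
    -- (ii) `s_k^i = k` and `s* = K`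
    ((∀ i k, k ≤ N → S i k = (k : ℝ)) ∧ sstar = (K : ℝ)) ∧
    -- (iii) if `K ≤ N − 1`, the KDE transport is the KNN-uniform transport
    (K ≤ N - 1 → ∀ i j, γstar i j =
      if (((σ i).symm j : Fin N) : ℕ) < K then 1 / ((K : ℝ) * M) else 0) := by
  -- basic facts
  have hR1 : ∀ i l, l < N → R i l = 1 := by
    intro i l hl
    have := hR i ⟨l, hl⟩
    simpa [hρ1] using this
  have hS' : ∀ i k, k ≤ N → S i k = (k : ℝ) := by
    intro i k hk
    rw [hS i k hk]
    rw [Finset.sum_congr rfl (fun l hl => hR1 i l (lt_of_lt_of_le (Finset.mem_range.mp hl) hk))]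
    simp
  have hck : ∀ k, 1 ≤ k → k ≤ N →
      c (k : ℝ) = ∑ i, ∑ l ∈ Finset.range (k - 1), (D i (k - 1) - D i l) := by
    intro k hk1 hkN
    rw [hc]
    refine Finset.sum_congr rfl (fun i _ => ?_)
    rcases eq_or_lt_of_le hk1 with h1 | h2
    · subst h1
      simp [hci0 i 1 (le_of_eq (by rw [hS' i 1 (le_of_lt hN)]; norm_num))]
    · have hk2 : 2 ≤ k := h2
      have hlt : S i (k - 1) < (k : ℝ) := by
        rw [hS' i (k - 1) (le_trans (Nat.sub_le _ _) hkN)]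
        exact_mod_cast Nat.sub_lt (lt_of_lt_of_le one_pos hk1) one_pos
      have hle : (k : ℝ) ≤ S i k := le_of_eq (hS' i k hkN).symm
      rw [hci i (k : ℝ) k hk2 hkN hlt hle]
      refine Finset.sum_congr rfl (fun l hl => ?_)
      rw [hR1 i l (lt_of_lt_of_le (Finset.mem_range.mp hl) (le_trans (Nat.sub_le _ _) hkN))]
      ring
  have i0 : Fin M := ⟨0, hM⟩
  have hKmem : (K : ℝ) ∈ Scal := by
    rw [hScal]
    exact Set.mem_insert_of_mem _ ⟨i0, K, hK1, hK2, (hS' i0 K hK2).symm⟩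
  have hKle : (K : ℝ) ≤ sstar := by
    refine hsstar3 _ hKmem ?_
    rw [hck K hK1 hK2]; exact hKcond
  have hsstarK : sstar = (K : ℝ) := by
    rw [hScal] at hsstar1
    rcases hsstar1 with h0 | ⟨i, k, hk1, hkN, hks⟩
    · exfalso
      have : (1 : ℝ) ≤ (K : ℝ) := by exact_mod_cast hK1
      linarith [hKle, h0.le, this]
    · have hsk : sstar = (k : ℝ) := by rw [hks, hS' i k hkN]
      rw [hsk] at hsstar2 hKle
      have hkK : k ≤ K := hKmax k hk1 hkN (by rw [← hck k hk1 hkN]; exact hsstar2)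
      have hKk : K ≤ k := by exact_mod_cast hKle
      rw [hsk]
      exact_mod_cast le_antisymm hkK hKk
  have hMne : (M : ℝ) ≠ 0 := Nat.cast_ne_zero.mpr (by omega)
  have hKne : (K : ℝ) ≠ 0 := Nat.cast_ne_zero.mpr (by omega)
  refine ⟨?_, ⟨hS', hsstarK⟩, ?_⟩
  · intro γ
    congr 1
    have hsbarN : sbar = (N : ℝ) := by
      rw [hsbar]
      simp [hρ1]
    refine iSup_congr (fun i => iSup_congr (fun j => ?_))
    rw [hρ1 j, hsbarN]
    ring_nf
  · intro hKN1 i j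
    have hKiK : Ki i = K := by
      refine le_antisymm ?_ (hKi3 i K hKN1 (by rw [hS' i K hK2, hsstarK]))
      have h := hKi2 i
      rw [hS' i (Ki i) (le_trans (hKi1 i) (Nat.sub_le _ _)), hsstarK] at h
      exact_mod_cast h
    have hKN : K < N := by omega
    set k : Fin N := (σ i).symm j with hk
    have hj : σ i k = j := (σ i).apply_symm_apply j
    rw [← hj, hγstar i k, hKiK, hsstarK]
    by_cases h1 : (k : ℕ) < K
    · rw [if_pos h1, if_pos h1, hρ1]
      field_simp
    · rw [if_neg h1, if_neg h1]
      by_cases h2 : (k : ℕ) = K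
      · rw [if_pos h2]
        have : ∀ l ∈ Finset.range K, R i l / ((M : ℝ) * (K : ℝ)) = 1 / ((M : ℝ) * (K : ℝ)) := by
          intro l hl
          rw [hR1 i l (lt_trans (Finset.mem_range.mp hl) hKN)]
        rw [Finset.sum_congr rfl this, Finset.sum_const, Finset.card_range, nsmul_eq_mul]
        field_simp
        simp
      · rw [if_neg h2]
end
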